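/- arXiv:2105.05154 — 3 statements merged into one kernel-verified Lean document; each statement's English description precedes it below -/
import Mathlib

section
/- Let s^β(τ) = 4π ∫₀^∞ β^u τ^{u-1} / Γ(u) du for β, τ > 0. Then for every q > β, the Laplace transform satisfies ∫₀^∞ e^{-qτ} s^β(τ) dτ = 4π / log(q/β). -/
open MeasureTheory

/-- `𝔰^β(τ) = 4π ∫₀^∞ β^u τ^{u-1} / Γ(u) du`. -/
noncomputable def sBeta (β τ : ℝ) : ℝ :=
  4 * Real.pi * ∫ u in Set.Ioi (0:ℝ), β ^ u * τ ^ (u - 1) / Real.Gamma u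

open Real Set in
/-- Laplace transform of `τ ↦ τ^{u-1}` kernel term. -/
lemma laplace_inner (β q : ℝ) (hβ : 0 < β) (hq : β < q) {u : ℝ} (hu : 0 < u) :
    ∫ τ in Ioi (0:ℝ), Real.exp (-(q * τ)) * (β ^ u * τ ^ (u - 1) / Real.Gamma u)
      = (β / q) ^ u := by
  have hq0 : 0 < q := hβ.trans hq
  have hΓ : 0 < Real.Gamma u := Real.Gamma_pos_of_pos hu
  have h1 : ∫ τ in Ioi (0:ℝ), Real.exp (-(q * τ)) * (β ^ u * τ ^ (u - 1) / Real.Gamma u)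
      = (β ^ u / Real.Gamma u) * ∫ τ in Ioi (0:ℝ), τ ^ (u - 1) * Real.exp (-(q * τ)) := by
    rw [← integral_const_mul]
    congr 1; ext τ; ring
  rw [h1, Real.integral_rpow_mul_exp_neg_mul_Ioi hu hq0,
    Real.div_rpow hβ.le hq0.le, one_div, Real.inv_rpow hq0.le]
  field_simp

open Real Set in
lemma integrableOn_rpow_exp (q : ℝ) (hq0 : 0 < q) {s : ℝ} (hs : -1 < s) :
    IntegrableOn (fun τ : ℝ => τ ^ s * Real.exp (-(q * τ))) (Ioi 0) := by
  have := integrableOn_rpow_mul_exp_neg_mul_rpow (p := 1) hs one_pos hq0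
  refine this.congr_fun (fun τ hτ => ?_) measurableSet_Ioi
  dsimp only
  rw [Real.rpow_one, neg_mul]

open Real Set Function in
lemma key_integrable (β q : ℝ) (hβ : 0 < β) (hq : β < q) :
    Integrable (uncurry fun (u τ : ℝ) =>
        Real.exp (-(q * τ)) * (β ^ u * τ ^ (u - 1) / Real.Gamma u))
      ((volume.restrict (Ioi 0)).prod (volume.restrict (Ioi 0))) := by
  have hq0 : 0 < q := hβ.trans hq
  have hmeas : AEStronglyMeasurable
      (uncurry fun (u τ : ℝ) =>
        Real.exp (-(q * τ)) * (β ^ u * τ ^ (u - 1) / Real.Gamma u))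
      ((volume.restrict (Ioi 0)).prod (volume.restrict (Ioi 0))) := by
    rw [Measure.prod_restrict]
    refine ContinuousOn.aestronglyMeasurable ?_ (measurableSet_Ioi.prod measurableSet_Ioi)
    have hΓ : ContinuousOn (fun p : ℝ × ℝ => Real.Gamma p.1) (Ioi 0 ×ˢ Ioi 0) := by
      intro p hp
      have : ContinuousAt (fun p : ℝ × ℝ => Real.Gamma p.1) p := by
        refine (Real.differentiableAt_Gamma (fun m => ?_)).continuousAt.comp
          continuousAt_fst
        have h0 : (0:ℝ) < p.1 := hp.1
        intro h
        rw [h] at h0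
        exact (not_lt.mpr (neg_nonpos.mpr (Nat.cast_nonneg m))) h0
      exact this.continuousWithinAt
    refine ContinuousOn.mul
      ((Real.continuous_exp.comp (continuous_const.mul continuous_snd).neg).continuousOn)
      (ContinuousOn.div (ContinuousOn.mul ?_ ?_) hΓ ?_)
    · exact fun p hp => ((Real.continuousAt_const_rpow hβ.ne').comp
        continuousAt_fst).continuousWithinAt
    · refine ContinuousOn.rpow continuous_snd.continuousOn
        (continuous_fst.sub continuous_const).continuousOn ?_
      intro p hp
      exact Or.inl (ne_of_gt hp.2)
    · intro p hp
      exact (Real.Gamma_pos_of_pos hp.1).ne'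
  rw [integrable_prod_iff hmeas]
  simp only [Function.uncurry_apply_pair]
  constructor
  · filter_upwards [ae_restrict_mem measurableSet_Ioi] with u hu
    have hu0 : (0:ℝ) < u := hu
    have : IntegrableOn (fun τ : ℝ => (β ^ u / Real.Gamma u) *
        (τ ^ (u - 1) * Real.exp (-(q * τ)))) (Ioi 0) :=
      (integrableOn_rpow_exp q hq0 (by linarith)).const_mul _
    refine this.congr_fun (fun τ _ => ?_) measurableSet_Ioi
    ring
  · have hkey : ∀ u ∈ Ioi (0:ℝ),
        (∫ τ in Ioi (0:ℝ), ‖Real.exp (-(q * τ)) * (β ^ u * τ ^ (u - 1) / Real.Gamma u)‖)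
          = (β / q) ^ u := by
      intro u hu
      have hu0 : (0:ℝ) < u := hu
      rw [← laplace_inner β q hβ hq hu0]
      refine setIntegral_congr_fun measurableSet_Ioi (fun τ hτ => ?_)
      have hτ0 : (0:ℝ) < τ := hτ
      rw [Real.norm_eq_abs, abs_of_nonneg]
      positivity
    have : IntegrableOn (fun u : ℝ => (β / q) ^ u) (Ioi 0) := by
      have hc : 0 < Real.log (q / β) := Real.log_pos ((one_lt_div hβ).mpr hq)
      have h5 := exp_neg_integrableOn_Ioi 0 hc
      refine h5.congr_fun (fun u hu => ?_) measurableSet_Ioi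
      rw [Real.rpow_def_of_pos (by positivity : (0:ℝ) < β / q), ← Real.log_inv, inv_div]
    exact this.congr ((ae_restrict_mem measurableSet_Ioi).mono
      (fun u hu => (hkey u hu).symm))

open Real Set Function in
/-- The Laplace transform of `𝔰^β`: for `q > β > 0`,
`∫₀^∞ e^{-qτ} 𝔰^β(τ) dτ = 4π / log(q/β)`. -/
theorem laplace_sBeta (β q : ℝ) (hβ : 0 < β) (hq : β < q) :
    ∫ τ in Set.Ioi (0:ℝ), Real.exp (-(q * τ)) * sBeta β τ
      = 4 * Real.pi / Real.log (q / β) := by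
  have hq0 : 0 < q := hβ.trans hq
  have hc : 0 < Real.log (q / β) := Real.log_pos ((one_lt_div hβ).mpr hq)
  have h1 : ∫ τ in Ioi (0:ℝ), Real.exp (-(q * τ)) * sBeta β τ
      = 4 * Real.pi * ∫ τ in Ioi (0:ℝ), ∫ u in Ioi (0:ℝ),
          Real.exp (-(q * τ)) * (β ^ u * τ ^ (u - 1) / Real.Gamma u) := by
    rw [← integral_const_mul]
    refine setIntegral_congr_fun measurableSet_Ioi (fun τ hτ => ?_)
    rw [sBeta, mul_left_comm, ← integral_const_mul]
  have hswap := integral_integral_swap (key_integrable β q hβ hq)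
  rw [h1, ← hswap]
  have h2 : ∫ u in Ioi (0:ℝ), ∫ τ in Ioi (0:ℝ),
      Real.exp (-(q * τ)) * (β ^ u * τ ^ (u - 1) / Real.Gamma u)
        = ∫ u in Ioi (0:ℝ), (β / q) ^ u := by
    refine setIntegral_congr_fun measurableSet_Ioi (fun u hu => ?_)
    exact laplace_inner β q hβ hq hu
  have h3 : ∫ u in Ioi (0:ℝ), (β / q) ^ u = 1 / Real.log (q / β) := by
    have h4 : ∀ u ∈ Ioi (0:ℝ), (β / q) ^ u
        = u ^ ((1:ℝ) - 1) * Real.exp (-(Real.log (q / β) * u)) := by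
      intro u hu
      rw [sub_self, Real.rpow_zero, one_mul,
        Real.rpow_def_of_pos (by positivity : (0:ℝ) < β / q), ← neg_mul,
        ← Real.log_inv, inv_div]
    rw [setIntegral_congr_fun measurableSet_Ioi h4,
      Real.integral_rpow_mul_exp_neg_mul_Ioi one_pos hc, Real.Gamma_one, mul_one,
      Real.rpow_one]
  rw [h2, h3]
  ring
end

section
/- For every r ∈ [0,1], the integral ∫_{-π}^{π} log|1 - r e^{iθ}| dθ equals 0. -/
open Real MeasureTheory intervalIntegral Set Filter Metric

noncomputable section

lemma cont_aux (r : ℝ) : Continuous (fun θ : ℝ => ‖1 - (r:ℂ) * Complex.exp (θ * Complex.I)‖) := by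
  continuity

lemma aux_circle (r : ℝ) (h0 : 0 < r) (h1 : r < 1) :
    (∮ z in C((0:ℂ), r), (z - 0)⁻¹ • Complex.log (1 - z)) = (2 * Real.pi * Complex.I : ℂ) • Complex.log (1 - 0) := by
  apply Complex.circleIntegral_sub_center_inv_smul_of_differentiable_on_off_countable h0
    (s := (∅ : Set ℂ)) countable_empty
  · intro z hz
    refine (continuousAt_clog ?_).comp (continuous_const.sub continuous_id).continuousAt
      |>.continuousWithinAt
    rw [Complex.mem_slitPlane_iff]
    left
    simp only [id_eq, Pi.sub_apply, Complex.sub_re, Complex.one_re]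
    have := (Complex.abs_re_le_norm z).trans (mem_closedBall_zero_iff.mp hz)
    have := abs_le.mp ((abs_le.mpr ⟨neg_abs_le _, le_abs_self _⟩ : |z.re| ≤ |z.re|))
    have hre : z.re ≤ r := le_trans (le_abs_self _) ((Complex.abs_re_le_norm z).trans (mem_closedBall_zero_iff.mp hz))
    linarith
  · intro z hz
    have hz' : ‖z‖ < 1 := lt_trans (mem_ball_zero_iff.mp hz.1) h1
    refine DifferentiableAt.clog ((differentiable_const _).sub differentiable_id).differentiableAt ?_
    rw [Complex.mem_slitPlane_iff]
    left
    simp only [id_eq, Complex.sub_re, Complex.one_re]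
    have hre : z.re ≤ ‖z‖ := le_trans (le_abs_self _) (Complex.abs_re_le_norm z)
    linarith

end

section
noncomputable def gfun (r : ℝ) : ℝ → ℝ :=
  fun θ => Real.log ‖1 - (r:ℂ) * Complex.exp (θ * Complex.I)‖

lemma aux_zero_two_pi (r : ℝ) (h0 : 0 < r) (h1 : r < 1) :
    ∫ θ in (0:ℝ)..(2*Real.pi), gfun r θ = 0 := by
  have key := aux_circle r h0 h1
  rw [show ((1:ℂ) - 0) = 1 by ring, Complex.log_one, smul_zero] at key
  rw [circleIntegral] at key
  have hne : ∀ θ : ℝ, circleMap 0 r θ ≠ 0 := fun θ h =>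
    (ne_of_gt h0) (circleMap_eq_center_iff.mp h)
  have hint : ∀ θ : ℝ, deriv (circleMap 0 r) θ •
      (circleMap 0 r θ - 0)⁻¹ • Complex.log (1 - circleMap 0 r θ)
      = Complex.I * Complex.log (1 - circleMap 0 r θ) := by
    intro θ
    rw [deriv_circleMap, sub_zero, smul_eq_mul, smul_eq_mul,
      mul_comm (circleMap 0 r θ) Complex.I, mul_assoc, mul_inv_cancel_left₀ (hne θ)]
  simp only [hint] at key
  rw [intervalIntegral.integral_const_mul] at key
  have hI : (Complex.I : ℂ) ≠ 0 := Complex.I_ne_zero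
  have key2 : (∫ θ in (0:ℝ)..(2*Real.pi), Complex.log (1 - circleMap 0 r θ)) = 0 := by
    rcases mul_eq_zero.mp key with h | h
    · exact absurd h hI
    · exact h
  -- take real parts
  have hcont : Continuous (fun θ : ℝ => Complex.log (1 - circleMap 0 r θ)) := by
    rw [continuous_iff_continuousAt]
    intro θ
    refine ContinuousAt.clog ?_ ?_
    · exact (continuous_const.sub (continuous_circleMap 0 r)).continuousAt
    · rw [Complex.mem_slitPlane_iff]
      left
      simp only [Complex.sub_re, Complex.one_re]
      have h2 : ‖circleMap 0 r θ‖ = r := by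
        simp [norm_circleMap_zero, abs_of_pos h0]
      have h3 := Complex.abs_re_le_norm (circleMap 0 r θ)
      rw [h2] at h3
      have : (circleMap 0 r θ).re ≤ r := le_trans (le_abs_self _) h3
      linarith
  have hii : IntervalIntegrable (fun θ : ℝ => Complex.log (1 - circleMap 0 r θ))
      MeasureSpace.volume 0 (2*Real.pi) := hcont.intervalIntegrable _ _
  have := Complex.reCLM.intervalIntegral_comp_comm hii
  rw [key2, map_zero] at this
  have heq : ∀ θ : ℝ, Complex.reCLM (Complex.log (1 - circleMap 0 r θ)) = gfun r θ := by
    intro θ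
    simp only [Complex.reCLM_apply, Complex.log_re, gfun, circleMap, zero_add,
      Complex.ofReal_mul]
  calc ∫ θ in (0:ℝ)..(2*Real.pi), gfun r θ
      = ∫ θ in (0:ℝ)..(2*Real.pi), Complex.reCLM (Complex.log (1 - circleMap 0 r θ)) := by
        simp only [heq]
    _ = 0 := this

lemma gfun_periodic (r : ℝ) : Function.Periodic (gfun r) (2*Real.pi) := by
  intro θ
  simp only [gfun]
  congr 3
  push_cast
  rw [add_mul, Complex.exp_add]
  have : Complex.exp (2*Real.pi*Complex.I) = 1 := Complex.exp_two_pi_mul_I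
  rw [this, mul_one]

lemma aux_lt_one (r : ℝ) (h0 : 0 ≤ r) (h1 : r < 1) :
    ∫ θ in (-Real.pi)..Real.pi, gfun r θ = 0 := by
  rcases eq_or_lt_of_le h0 with rfl | h0'
  · simp [gfun]
  · have := (gfun_periodic r).intervalIntegral_add_eq (-Real.pi) 0
    rw [show -Real.pi + 2*Real.pi = Real.pi by ring, zero_add] at this
    rw [this]
    exact aux_zero_two_pi r h0' h1
end

section LogInt

lemma integrableOn_neg_log_Ioc01 :
    IntegrableOn (fun x : ℝ => -Real.log x) (Ioc (0:ℝ) 1) MeasureSpace.volume := by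
  apply intervalIntegral.integrableOn_deriv_of_nonneg (g := fun x => x - x * Real.log x)
  · exact continuousOn_id.sub Real.continuous_mul_log.continuousOn
  · intro x hx
    have hx0 : x ≠ 0 := ne_of_gt hx.1
    have h1 : HasDerivAt (fun y : ℝ => y * Real.log y) (Real.log x + 1) x := by
      have := (hasDerivAt_id x).mul (Real.hasDerivAt_log hx0)
      exact this.congr_deriv (by simp [hx0])
    have := (hasDerivAt_id x).sub h1
    exact this.congr_deriv (by ring)
  · intro x hx
    simp only [neg_nonneg]
    exact Real.log_nonpos hx.1.le hx.2.le

lemma integrableOn_log_Ioc0pi :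
    IntegrableOn (fun x : ℝ => Real.log x) (Ioc (0:ℝ) Real.pi) MeasureSpace.volume := by
  have h1 : IntegrableOn (fun x : ℝ => Real.log x) (Ioc (0:ℝ) 1) MeasureSpace.volume := by
    have h := integrableOn_neg_log_Ioc01.neg
    have h2 : IntegrableOn (-fun x : ℝ => -Real.log x) (Ioc (0:ℝ) 1) MeasureSpace.volume := h
    exact IntegrableOn.congr_fun h2 (fun x _ => by simp) measurableSet_Ioc
  have h2 : IntegrableOn (fun x : ℝ => Real.log x) (Ioc (1:ℝ) Real.pi) MeasureSpace.volume := by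
    have hpi : (1:ℝ) ≤ Real.pi := by linarith [Real.pi_gt_three]
    have h := intervalIntegrable_log (μ := MeasureSpace.volume) (a := 1) (b := Real.pi)
      (by intro h; rw [Set.mem_uIcc] at h
          rcases h with ⟨h1, _⟩ | ⟨h1, _⟩ <;> linarith [Real.pi_gt_three])
    rwa [intervalIntegrable_iff_integrableOn_Ioc_of_le hpi] at h
  have := h1.union h2
  apply this.mono_set
  intro x hx
  rcases le_or_gt x 1 with h | h
  · exact Or.inl ⟨hx.1, h⟩
  · exact Or.inr ⟨h, hx.2⟩

lemma intervalIntegrable_log_abs :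
    IntervalIntegrable (fun x : ℝ => Real.log |x|) MeasureSpace.volume (-Real.pi) Real.pi := by
  have h1 : IntervalIntegrable (fun x : ℝ => Real.log |x|) MeasureSpace.volume 0 Real.pi := by
    rw [intervalIntegrable_iff_integrableOn_Ioc_of_le Real.pi_pos.le]
    apply integrableOn_log_Ioc0pi.congr_fun ?_ measurableSet_Ioc
    intro x hx
    simp [abs_of_pos hx.1]
  have h2 : IntervalIntegrable (fun x : ℝ => Real.log |x|) MeasureSpace.volume (-Real.pi) 0 := by
    have := (IntervalIntegrable.iff_comp_neg (by simp)).mp h1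
    simp only [abs_neg, neg_zero] at this
    exact this.symm
  exact h2.trans h1

end LogInt

section Rone

lemma abs_sq_eq (r θ : ℝ) :
    ‖1 - (r:ℂ) * Complex.exp (θ * Complex.I)‖^2
      = 1 - 2*r*Real.cos θ + r^2 := by
  rw [Complex.sq_norm, Complex.normSq_apply]
  simp only [Complex.sub_re, Complex.sub_im, Complex.one_re, Complex.one_im,
    Complex.mul_re, Complex.mul_im, Complex.ofReal_re, Complex.ofReal_im,
    Complex.exp_ofReal_mul_I_re, Complex.exp_ofReal_mul_I_im]
  nlinarith [Real.sin_sq_add_cos_sq θ]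

lemma key_bound {r θ : ℝ} (hr : 1/2 ≤ r) (hr1 : r ≤ 1)
    (hθ : θ ∈ Ioc (-Real.pi) Real.pi) (h0 : θ ≠ 0) :
    |gfun r θ| ≤ 4 + |Real.log (|θ|)| := by
  set A := ‖1 - (r:ℂ) * Complex.exp (θ * Complex.I)‖ with hA
  have hA2 : A^2 = 1 - 2*r*Real.cos θ + r^2 := abs_sq_eq r θ
  have habs : |θ| ≤ Real.pi := abs_le.mpr ⟨hθ.1.le, hθ.2⟩
  have hcos : Real.cos θ ≤ 1 - 2/Real.pi^2 * θ^2 := Real.cos_le_one_sub_mul_cos_sq habs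
  have hpi := Real.pi_pos
  have hθ2 : 0 < θ^2 := by positivity
  have hlow : 2/Real.pi^2 * θ^2 ≤ A^2 := by nlinarith
  have hAup : A ≤ 2 := by
    have h1 : A ≤ ‖(1:ℂ)‖ + ‖(r:ℂ) * Complex.exp (θ * Complex.I)‖ := by
      rw [hA]; exact norm_sub_le _ _
    have h2 : ‖(r:ℂ) * Complex.exp (θ * Complex.I)‖ = r := by
      rw [norm_mul, Complex.norm_exp_ofReal_mul_I, Complex.norm_real, Real.norm_eq_abs,
        abs_of_nonneg (by linarith), mul_one]
    rw [h2, norm_one] at h1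
    linarith
  have hc : 0 < 2/Real.pi^2 * θ^2 := by positivity
  have hAnn : (0:ℝ) ≤ A := norm_nonneg _
  have hApos : 0 < A := by nlinarith
  -- upper bound for log A
  have hup : Real.log A ≤ 1 := by
    have := Real.log_le_log hApos hAup
    have h2 := Real.log_le_sub_one_of_pos (by norm_num : (0:ℝ) < 2)
    linarith
  -- lower bound
  have hlog2 : Real.log (A^2) = 2 * Real.log A := by
    have h := Real.log_pow (n := 2) (x := A)
    push_cast at h
    linarith
  have hllow : Real.log (2/Real.pi^2 * θ^2) ≤ 2 * Real.log A := by
    rw [← hlog2]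
    exact Real.log_le_log hc hlow
  have hsplit : Real.log (2/Real.pi^2 * θ^2)
      = Real.log (2/Real.pi^2) + 2 * Real.log (|θ|) := by
    rw [Real.log_mul (by positivity) (ne_of_gt hθ2)]
    have h := Real.log_pow (n := 2) (x := θ)
    push_cast at h
    rw [h, Real.log_abs]
  have hlogpi : Real.log Real.pi ≤ 3 := by
    have := Real.log_le_sub_one_of_pos hpi
    have := Real.pi_le_four
    linarith
  have hquot : -6 ≤ Real.log (2/Real.pi^2) := by
    rw [div_eq_mul_inv, Real.log_mul (by norm_num) (by positivity), Real.log_inv,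
      Real.log_pow]
    have h2 : (0:ℝ) ≤ Real.log 2 := Real.log_nonneg (by norm_num)
    push_cast
    linarith
  have hlogabs : -|Real.log (|θ|)| ≤ Real.log (|θ|) := neg_abs_le _
  have hlower : -(4 + |Real.log (|θ|)|) ≤ Real.log A := by
    have : Real.log (2/Real.pi^2) + 2 * Real.log (|θ|) ≤ 2 * Real.log A := by
      rw [← hsplit]; exact hllow
    linarith
  have : |Real.log A| ≤ 4 + |Real.log (|θ|)| := by
    rw [abs_le]
    constructor
    · exact hlower
    · have : (0:ℝ) ≤ |Real.log (|θ|)| := abs_nonneg _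
      linarith
  simpa [gfun, ← hA] using this

end Rone

section Final

lemma gfun_cont_of_lt_one {r : ℝ} (h0 : 0 ≤ r) (h1 : r < 1) : Continuous (gfun r) := by
  have hne : ∀ θ : ℝ, ‖1 - (r:ℂ) * Complex.exp (θ * Complex.I)‖ ≠ 0 := by
    intro θ
    rw [ne_eq, norm_eq_zero, sub_eq_zero]
    intro h
    have : ‖(r:ℂ) * Complex.exp (θ * Complex.I)‖ = 1 := by rw [← h, norm_one]
    rw [norm_mul, Complex.norm_exp_ofReal_mul_I, Complex.norm_real, Real.norm_eq_abs, abs_of_nonneg h0,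
      mul_one] at this
    linarith
  exact (cont_aux r).log hne

lemma one_sub_exp_ne {θ : ℝ} (hθ : θ ∈ Ioc (-Real.pi) Real.pi) (h0 : θ ≠ 0) :
    (1:ℂ) - Complex.exp (θ * Complex.I) ≠ 0 := by
  rw [ne_eq, sub_eq_zero]
  intro h
  obtain ⟨n, hn⟩ := Complex.exp_eq_one_iff.mp h.symm
  have hI : (θ:ℂ) = (n:ℂ) * (2 * Real.pi) :=
    mul_right_cancel₀ Complex.I_ne_zero (by rw [hn]; ring)
  have hθeq : θ = n * (2 * Real.pi) := by exact_mod_cast hI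
  have hpi := Real.pi_pos
  rcases lt_trichotomy n 0 with hlt | rfl | hgt
  · have : (n:ℝ) ≤ -1 := by exact_mod_cast Int.le_sub_one_of_lt hlt
    have h1 := hθ.1
    nlinarith
  · simp at hθeq; exact h0 hθeq
  · have : (1:ℝ) ≤ (n:ℝ) := by exact_mod_cast hgt
    have h2 := hθ.2
    nlinarith

noncomputable def rseq (n : ℕ) : ℝ := 1 - (1/2)^(n+1)

lemma rseq_mem (n : ℕ) : 1/2 ≤ rseq n ∧ 0 ≤ rseq n ∧ rseq n < 1 := by
  have h1 : ((1:ℝ)/2)^(n+1) ≤ (1/2)^1 :=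
    pow_le_pow_of_le_one (by norm_num) (by norm_num) (by omega)
  have h2 : (0:ℝ) < (1/2)^(n+1) := by positivity
  refine ⟨?_, ?_, ?_⟩ <;> simp only [rseq] <;> [skip; skip; skip] <;> nlinarith [h1, h2]

lemma rseq_tendsto : Filter.Tendsto rseq Filter.atTop (nhds 1) := by
  have h : Filter.Tendsto (fun n : ℕ => ((1:ℝ)/2)^(n+1)) Filter.atTop (nhds 0) := by
    simpa [pow_succ] using
      (tendsto_pow_atTop_nhds_zero_of_lt_one (by norm_num : (0:ℝ) ≤ 1/2)
        (by norm_num)).mul_const (1/2:ℝ)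
  have h2 := (tendsto_const_nhds (x := (1:ℝ)) (f := Filter.atTop (α := ℕ))).sub h
  rw [sub_zero] at h2
  exact h2

lemma gfun_lim {θ : ℝ} (hθ : θ ∈ Ioc (-Real.pi) Real.pi) (h0 : θ ≠ 0) :
    Filter.Tendsto (fun n => gfun (rseq n) θ) Filter.atTop (nhds (gfun 1 θ)) := by
  have hinner : Continuous
      (fun s : ℝ => ‖1 - (s:ℂ) * Complex.exp (θ * Complex.I)‖) := by
    continuity
  have hne : ‖1 - ((1:ℝ):ℂ) * Complex.exp (θ * Complex.I)‖ ≠ 0 := by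
    rw [Complex.ofReal_one, one_mul, ne_eq, norm_eq_zero]
    exact one_sub_exp_ne hθ h0
  have hcont : ContinuousAt (fun s : ℝ => gfun s θ) 1 := hinner.continuousAt.log hne
  exact hcont.tendsto.comp rseq_tendsto

lemma aux_one : ∫ θ in Ioc (-Real.pi) Real.pi, gfun 1 θ = 0 := by
  have hpi := Real.pi_pos
  set μ := MeasureSpace.volume.restrict (Ioc (-Real.pi) Real.pi) with hμ
  have hmem : ∀ᵐ θ ∂μ, θ ∈ Ioc (-Real.pi) Real.pi ∧ θ ≠ 0 := by
    refine (ae_restrict_mem measurableSet_Ioc).and ?_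
    refine Filter.Eventually.filter_mono (MeasureTheory.ae_mono Measure.restrict_le_self) ?_
    rw [MeasureTheory.ae_iff]
    have : {a : ℝ | ¬a ≠ 0} = {0} := by ext x; simp
    rw [this]
    exact Real.volume_singleton
  have hbound_int : Integrable (fun θ : ℝ => 4 + |Real.log (|θ|)|) μ := by
    have h1 : IntegrableOn (fun θ : ℝ => Real.log (|θ|)) (Ioc (-Real.pi) Real.pi)
        MeasureSpace.volume := by
      have := intervalIntegrable_log_abs
      rwa [intervalIntegrable_iff_integrableOn_Ioc_of_le (by linarith)] at this
    have h2 := h1.abs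
    have h3 : IntegrableOn (fun _ : ℝ => (4:ℝ)) (Ioc (-Real.pi) Real.pi)
        MeasureSpace.volume := integrableOn_const measure_Ioc_lt_top.ne
    exact h3.add h2
  have key := MeasureTheory.tendsto_integral_of_dominated_convergence
    (F := fun n θ => gfun (rseq n) θ) (f := gfun 1) (μ := μ)
    (bound := fun θ => 4 + |Real.log (|θ|)|)
    (fun n => ((gfun_cont_of_lt_one (rseq_mem n).2.1 (rseq_mem n).2.2).aestronglyMeasurable))
    hbound_int
    (fun n => by
      filter_upwards [hmem] with θ hθ
      exact key_bound (rseq_mem n).1 (rseq_mem n).2.2.le hθ.1 hθ.2)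
    (by
      filter_upwards [hmem] with θ hθ
      exact gfun_lim hθ.1 hθ.2)
  have hzero : ∀ n, ∫ θ, gfun (rseq n) θ ∂μ = 0 := by
    intro n
    have := aux_lt_one (rseq n) (rseq_mem n).2.1 (rseq_mem n).2.2
    rwa [intervalIntegral.integral_of_le (by linarith)] at this
  simp only [hzero] at key
  exact tendsto_nhds_unique key tendsto_const_nhds

end Final

/-- For every `r ∈ [0,1]`, `∫_{-π}^{π} log|1 - r e^{iθ}| dθ = 0`. -/
theorem integral_log_abs_one_sub_circle (r : ℝ) (hr : r ∈ Set.Icc (0:ℝ) 1) :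
    ∫ θ in (-Real.pi)..Real.pi,
        Real.log ‖1 - (r : ℂ) * Complex.exp (θ * Complex.I)‖ = 0 := by
  rcases lt_or_eq_of_le hr.2 with h1 | rfl
  · exact aux_lt_one r hr.1 h1
  · have := aux_one
    rw [intervalIntegral.integral_of_le (by linarith [Real.pi_pos])]
    simpa [gfun] using this
end

section
/- Define inductively φ₀(v) = 1 and φ_k(v) = ∫₀¹ φ_{k-1}(s) / √(s(s+v)) ds for v ∈ (0,1) and k ≥ 1. Then φ_k(v) ≤ 32^k e / √v for all v ∈ (0,1) and k ≥ 1, and consequently ∫_{(0,1)^{m+1}} ∏_{ℓ=1}^{m-1} 1/√(u_{ℓ+1}(u_{ℓ+1} + u_ℓ)) du₁⋯du_{m+1} ≤ 2e · 32^{m-1} for every integer m ≥ 1. -/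
open MeasureTheory Set intervalIntegral
open scoped ENNReal

/-- The recursively defined functions `φ₀ ≡ 1`,
`φ_k(v) = ∫₀¹ φ_{k-1}(s)/√(s(s+v)) ds`. -/
noncomputable def phiRec : ℕ → ℝ → ℝ
  | 0 => fun _ => 1
  | (k + 1) => fun v => ∫ s in Set.Ioo (0:ℝ) 1, phiRec k s / Real.sqrt (s * (s + v))

namespace PhiAux

noncomputable def g (s v : ℝ) : ℝ≥0∞ := ENNReal.ofReal (1 / Real.sqrt (s * (s + v)))

noncomputable def Phi : ℕ → ℝ → ℝ≥0∞
  | 0 => fun _ => 1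
  | (k + 1) => fun v => ∫⁻ s in Set.Ioo (0:ℝ) 1, Phi k s * g s v

lemma phiRec_nonneg : ∀ k (v : ℝ), 0 ≤ phiRec k v := by
  intro k
  induction k with
  | zero => intro v; simp [phiRec]
  | succ k ih =>
    intro v
    rw [phiRec]
    refine setIntegral_nonneg measurableSet_Ioo fun s _ => ?_
    exact div_nonneg (ih s) (Real.sqrt_nonneg _)

lemma ofReal_phiRec_le : ∀ k (v : ℝ), ENNReal.ofReal (phiRec k v) ≤ Phi k v := by
  intro k
  induction k with
  | zero => intro v; simp [phiRec, Phi]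
  | succ k ih =>
    intro v
    rw [phiRec, Phi]
    calc ENNReal.ofReal (∫ s in Set.Ioo (0:ℝ) 1, phiRec k s / Real.sqrt (s * (s + v)))
        ≤ ∫⁻ s in Set.Ioo (0:ℝ) 1,
            ENNReal.ofReal (phiRec k s / Real.sqrt (s * (s + v))) := by
          by_cases hint : Integrable (fun s => phiRec k s / Real.sqrt (s * (s + v)))
            ((volume : Measure ℝ).restrict (Set.Ioo 0 1))
          · exact le_of_eq (ofReal_integral_eq_lintegral_ofReal hint
              (Filter.Eventually.of_forall fun s =>
                div_nonneg (phiRec_nonneg k s) (Real.sqrt_nonneg _)))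
          · rw [integral_undef hint]; simp
      _ ≤ ∫⁻ s in Set.Ioo (0:ℝ) 1, Phi k s * g s v := by
          refine lintegral_mono fun s => ?_
          rw [div_eq_mul_inv, ENNReal.ofReal_mul (phiRec_nonneg k s)]
          exact mul_le_mul' (ih s) (by rw [g, one_div])

lemma intOn1 (v : ℝ) (hv : 0 < v) :
    IntegrableOn (fun s : ℝ => s ^ (-(3/4) : ℝ)) (Ioo 0 v) := by
  have h := (intervalIntegral.intervalIntegrable_rpow' (a := 0) (b := v)
    (r := -(3/4)) (by norm_num))
  rw [intervalIntegrable_iff_integrableOn_Ioc_of_le hv.le] at h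
  exact h.mono_set Set.Ioo_subset_Ioc_self

lemma int1 (v : ℝ) (hv : 0 < v) :
    ∫ s in Ioo 0 v, s ^ (-(3/4) : ℝ) = 4 * v ^ ((1/4) : ℝ) := by
  rw [← MeasureTheory.integral_Ioc_eq_integral_Ioo,
    ← intervalIntegral.integral_of_le hv.le,
    integral_rpow (Or.inl (by norm_num))]
  rw [Real.zero_rpow (by norm_num)]
  norm_num; ring

lemma intOn2 (v : ℝ) (hv : 0 < v) (hv1 : v < 1) :
    IntegrableOn (fun s : ℝ => s ^ (-(5/4) : ℝ)) (Ico v 1) := by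
  have h := (intervalIntegral.intervalIntegrable_rpow (a := v) (b := 1)
    (μ := volume) (r := -(5/4)) (Or.inr (by
      rw [Set.uIcc_of_le hv1.le]; intro hmem; exact absurd hmem.1 (by linarith))))
  rw [intervalIntegrable_iff_integrableOn_Ioc_of_le hv1.le] at h
  have h2 : IntegrableOn (fun s : ℝ => s ^ (-(5/4) : ℝ)) (Ioo v 1) :=
    h.mono_set Set.Ioo_subset_Ioc_self
  rwa [integrableOn_Ico_iff_integrableOn_Ioo]

lemma int2 (v : ℝ) (hv : 0 < v) (hv1 : v < 1) :
    ∫ s in Ico v 1, s ^ (-(5/4) : ℝ) = 4 * (v ^ (-(1/4) : ℝ) - 1) := by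
  rw [MeasureTheory.integral_Ico_eq_integral_Ioo,
    ← MeasureTheory.integral_Ioc_eq_integral_Ioo,
    ← intervalIntegral.integral_of_le hv1.le,
    integral_rpow (Or.inr ⟨by norm_num, by
      rw [Set.uIcc_of_le hv1.le]; intro hmem; exact absurd hmem.1 (by linarith)⟩)]
  rw [Real.one_rpow]
  norm_num; ring

lemma intOn3 : IntegrableOn (fun s : ℝ => s ^ (-(1/4) : ℝ)) (Ioo 0 1) := by
  have h := (intervalIntegral.intervalIntegrable_rpow' (a := 0) (b := 1)
    (r := -(1/4)) (by norm_num))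
  rw [intervalIntegrable_iff_integrableOn_Ioc_of_le zero_le_one] at h
  exact h.mono_set Set.Ioo_subset_Ioc_self

lemma int3 : ∫ s in Ioo (0:ℝ) 1, s ^ (-(1/4) : ℝ) = 4/3 := by
  rw [← MeasureTheory.integral_Ioc_eq_integral_Ioo,
    ← intervalIntegral.integral_of_le zero_le_one,
    integral_rpow (Or.inl (by norm_num))]
  rw [Real.zero_rpow (by norm_num), Real.one_rpow]
  norm_num

lemma Phi_le : ∀ k, ∀ v ∈ Ioo (0:ℝ) 1,
    Phi k v ≤ ENNReal.ofReal (4 * 8 ^ k * v ^ (-(1/4) : ℝ)) := by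
  intro k
  induction k with
  | zero =>
    intro v hv
    have h1 : (1:ℝ) ≤ v ^ (-(1/4) : ℝ) := by
      have := Real.rpow_le_rpow_of_exponent_ge hv.1 hv.2.le
        (by norm_num : -(1/4:ℝ) ≤ 0)
      rwa [Real.rpow_zero] at this
    have : (1:ℝ) ≤ 4 * 8 ^ 0 * v ^ (-(1/4) : ℝ) := by nlinarith
    calc Phi 0 v = 1 := rfl
      _ = ENNReal.ofReal 1 := by simp
      _ ≤ _ := ENNReal.ofReal_le_ofReal this
  | succ k ih =>
    intro v hv
    obtain ⟨hv0, hv1⟩ := hv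
    set A : ℝ := 4 * 8 ^ k with hA_def
    have hA : 0 < A := by positivity
    have hsplit : Ioo (0:ℝ) 1 = Ioo 0 v ∪ Ico v 1 :=
      (Set.Ioo_union_Ico_eq_Ioo hv0 hv1.le).symm
    have hPhi : Phi (k+1) v
        = (∫⁻ s in Ioo (0:ℝ) v, Phi k s * g s v)
          + ∫⁻ s in Ico (v:ℝ) 1, Phi k s * g s v := by
      show (∫⁻ s in Ioo (0:ℝ) 1, Phi k s * g s v) = _
      rw [hsplit, lintegral_union measurableSet_Ico
        (by rw [Set.disjoint_left]
            rintro x ⟨_, h2⟩ ⟨h3, _⟩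
            exact absurd h3 (not_le.2 h2))]
    -- piece 1
    have hp1 : (∫⁻ s in Ioo (0:ℝ) v, Phi k s * g s v)
        ≤ ENNReal.ofReal (4 * A * v ^ (-(1/4) : ℝ)) := by
      have hmono : ∀ s ∈ Ioo (0:ℝ) v, Phi k s * g s v
          ≤ ENNReal.ofReal (A * v ^ (-(1/2):ℝ) * s ^ (-(3/4) : ℝ)) := by
        intro s hs
        have hs0 : 0 < s := hs.1
        have hsv : s < v := hs.2
        have hs1 : s < 1 := lt_trans hsv hv1
        have hsqrt_le : Real.sqrt (s * v) ≤ Real.sqrt (s * (s + v)) :=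
          Real.sqrt_le_sqrt (by nlinarith)
        have hsv0 : 0 < Real.sqrt (s * v) := Real.sqrt_pos.2 (by positivity)
        have hg : (1:ℝ) / Real.sqrt (s * (s + v)) ≤ s ^ (-(1/2):ℝ) * v ^ (-(1/2):ℝ) :=
          calc (1:ℝ) / Real.sqrt (s * (s + v))
              ≤ 1 / Real.sqrt (s * v) := one_div_le_one_div_of_le hsv0 hsqrt_le
            _ = (s*v) ^ (-(1/2):ℝ) := by
                rw [Real.rpow_neg (by positivity), ← Real.sqrt_eq_rpow, one_div]
            _ = s ^ (-(1/2):ℝ) * v ^ (-(1/2):ℝ) := Real.mul_rpow hs0.le hv0.le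
        calc Phi k s * g s v
            ≤ ENNReal.ofReal (A * s ^ (-(1/4) : ℝ))
              * ENNReal.ofReal (s ^ (-(1/2):ℝ) * v ^ (-(1/2):ℝ)) := by
              exact mul_le_mul' (ih s ⟨hs0, hs1⟩) (ENNReal.ofReal_le_ofReal hg)
          _ = ENNReal.ofReal (A * s ^ (-(1/4) : ℝ) * (s ^ (-(1/2):ℝ) * v ^ (-(1/2):ℝ))) :=
              (ENNReal.ofReal_mul (by positivity)).symm
          _ = ENNReal.ofReal (A * v ^ (-(1/2):ℝ) * s ^ (-(3/4) : ℝ)) := by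
              congr 1
              rw [show (-(3/4):ℝ) = (-(1/4)) + (-(1/2)) by norm_num,
                Real.rpow_add hs0]
              ring
      calc (∫⁻ s in Ioo (0:ℝ) v, Phi k s * g s v)
          ≤ ∫⁻ s in Ioo (0:ℝ) v,
              ENNReal.ofReal (A * v ^ (-(1/2):ℝ) * s ^ (-(3/4) : ℝ)) := by
            refine lintegral_mono_ae ?_
            filter_upwards [ae_restrict_mem measurableSet_Ioo] with s hs
            exact hmono s hs
        _ = ENNReal.ofReal (∫ s in Ioo (0:ℝ) v, A * v ^ (-(1/2):ℝ) * s ^ (-(3/4) : ℝ)) := by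
            rw [ofReal_integral_eq_lintegral_ofReal
              (((intOn1 v hv0).const_mul _))
              (by filter_upwards [ae_restrict_mem measurableSet_Ioo] with s hs
                  have : (0:ℝ) ≤ s ^ (-(3/4):ℝ) := Real.rpow_nonneg hs.1.le _
                  positivity)]
        _ = ENNReal.ofReal (A * v ^ (-(1/2):ℝ) * (4 * v ^ ((1/4) : ℝ))) := by
            rw [MeasureTheory.integral_const_mul, int1 v hv0]
        _ = ENNReal.ofReal (4 * A * v ^ (-(1/4) : ℝ)) := by
            congr 1
            rw [show (-(1/4):ℝ) = (-(1/2)) + (1/4) by norm_num, Real.rpow_add hv0]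
            ring
    -- piece 2
    have hp2 : (∫⁻ s in Ico (v:ℝ) 1, Phi k s * g s v)
        ≤ ENNReal.ofReal (4 * A * v ^ (-(1/4) : ℝ)) := by
      have hmono : ∀ s ∈ Ico (v:ℝ) 1, Phi k s * g s v
          ≤ ENNReal.ofReal (A * s ^ (-(5/4) : ℝ)) := by
        intro s hs
        have hs0 : 0 < s := lt_of_lt_of_le hv0 hs.1
        have hs1 : s < 1 := hs.2
        have hsqrt_le : s ≤ Real.sqrt (s * (s + v)) :=
          (Real.le_sqrt hs0.le (by nlinarith)).2 (by nlinarith)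
        have hg : (1:ℝ) / Real.sqrt (s * (s + v)) ≤ s ^ (-(1:ℕ) : ℝ) := by
          have h1 : (1:ℝ) / Real.sqrt (s * (s + v)) ≤ 1 / s :=
            one_div_le_one_div_of_le hs0 hsqrt_le
          rw [show (-(1:ℕ) : ℝ) = (-1 : ℝ) by norm_num, Real.rpow_neg_one]
          simpa [one_div] using h1
        calc Phi k s * g s v
            ≤ ENNReal.ofReal (A * s ^ (-(1/4) : ℝ))
              * ENNReal.ofReal (s ^ (-(1:ℕ):ℝ)) :=
              mul_le_mul' (ih s ⟨hs0, hs1⟩) (ENNReal.ofReal_le_ofReal hg)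
          _ = ENNReal.ofReal (A * s ^ (-(1/4) : ℝ) * s ^ (-(1:ℕ):ℝ)) :=
              (ENNReal.ofReal_mul (by positivity)).symm
          _ = ENNReal.ofReal (A * s ^ (-(5/4) : ℝ)) := by
              congr 1
              rw [show (-(5/4):ℝ) = (-(1/4)) + (-(1:ℕ):ℝ) by norm_num,
                Real.rpow_add hs0]
              ring
      calc (∫⁻ s in Ico (v:ℝ) 1, Phi k s * g s v)
          ≤ ∫⁻ s in Ico (v:ℝ) 1, ENNReal.ofReal (A * s ^ (-(5/4) : ℝ)) := by
            refine lintegral_mono_ae ?_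
            filter_upwards [ae_restrict_mem measurableSet_Ico] with s hs
            exact hmono s hs
        _ = ENNReal.ofReal (∫ s in Ico (v:ℝ) 1, A * s ^ (-(5/4) : ℝ)) := by
            rw [ofReal_integral_eq_lintegral_ofReal
              ((intOn2 v hv0 hv1).const_mul _)
              (by filter_upwards [ae_restrict_mem measurableSet_Ico] with s hs
                  have hs0 : (0:ℝ) < s := lt_of_lt_of_le hv0 hs.1
                  have : (0:ℝ) ≤ s ^ (-(5/4):ℝ) := Real.rpow_nonneg hs0.le _
                  positivity)]
        _ = ENNReal.ofReal (A * (4 * (v ^ (-(1/4) : ℝ) - 1))) := by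
            rw [MeasureTheory.integral_const_mul, int2 v hv0 hv1]
        _ ≤ ENNReal.ofReal (4 * A * v ^ (-(1/4) : ℝ)) := by
            refine ENNReal.ofReal_le_ofReal ?_
            nlinarith [Real.rpow_nonneg hv0.le (-(1/4):ℝ), hA]
    rw [hPhi]
    calc _ ≤ ENNReal.ofReal (4 * A * v ^ (-(1/4) : ℝ))
          + ENNReal.ofReal (4 * A * v ^ (-(1/4) : ℝ)) := add_le_add hp1 hp2
      _ = ENNReal.ofReal (4 * 8 ^ (k+1) * v ^ (-(1/4) : ℝ)) := by
          rw [← ENNReal.ofReal_add (by positivity) (by positivity)]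
          congr 1
          rw [hA_def]; ring

/-! ### The chain product and Fubini reduction -/

lemma measurable_g2 : Measurable fun p : ℝ × ℝ => g p.1 p.2 := by
  apply ENNReal.measurable_ofReal.comp
  exact measurable_const.div
    (Real.continuous_sqrt.measurable.comp (measurable_fst.mul (measurable_fst.add measurable_snd)))

noncomputable def U (v : ℝ) {n : ℕ} (y : Fin n → ℝ) : ℕ → ℝ
  | 0 => v
  | (j+1) => if h : j < n then y ⟨j, h⟩ else 0

noncomputable def P (k : ℕ) (v : ℝ) {n : ℕ} (y : Fin n → ℝ) : ℝ≥0∞ :=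
  ∏ ℓ ∈ Finset.range k, g (U v y (ℓ+1)) (U v y ℓ)

lemma measurable_U2 (n j : ℕ) :
    Measurable fun p : ℝ × (Fin n → ℝ) => U p.1 p.2 j := by
  cases j with
  | zero => exact measurable_fst
  | succ j =>
    by_cases h : j < n
    · have h2 : Measurable fun p : ℝ × (Fin n → ℝ) => p.2 ⟨j, h⟩ :=
        (measurable_pi_apply (⟨j, h⟩ : Fin n)).comp measurable_snd
      simpa [U, h] using h2
    · simp [U, h]

lemma measurable_P2 (k n : ℕ) :
    Measurable fun p : ℝ × (Fin n → ℝ) => P k p.1 p.2 := by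
  simp only [P]
  refine Finset.measurable_prod _ fun ℓ _ => ?_
  have h : Measurable ((fun q : ℝ × ℝ => g q.1 q.2) ∘
      fun p : ℝ × (Fin n → ℝ) => (U p.1 p.2 (ℓ+1), U p.1 p.2 ℓ)) :=
    measurable_g2.comp ((measurable_U2 n (ℓ+1)).prodMk (measurable_U2 n ℓ))
  exact h

lemma measurable_P (k : ℕ) (v : ℝ) (n : ℕ) :
    Measurable fun y : Fin n → ℝ => P k v y := by
  have h : Measurable ((fun p : ℝ × (Fin n → ℝ) => P k p.1 p.2) ∘
      fun y : Fin n → ℝ => ((v, y) : ℝ × (Fin n → ℝ))) :=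
    (measurable_P2 k n).comp (measurable_const.prodMk measurable_id)
  exact h

lemma P_succ (k : ℕ) (v : ℝ) {n : ℕ} (y : Fin (n+1) → ℝ) :
    P (k+1) v y = g (y 0) v * P k (y 0) (Fin.tail y) := by
  have h0 : U v y 1 = y 0 := by simp [U]
  have h1 : ∀ ℓ : ℕ, U v y (ℓ+2) = U (y 0) (Fin.tail y) (ℓ+1) := by
    intro ℓ
    by_cases h : ℓ < n
    · simp [U, h, Nat.succ_lt_succ_iff, Fin.tail]
    · simp [U, h, Nat.succ_lt_succ_iff]
  have h2 : ∀ ℓ : ℕ, U v y (ℓ+1) = U (y 0) (Fin.tail y) ℓ := by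
    intro ℓ
    cases ℓ with
    | zero => simp [U]
    | succ j => exact h1 j
  calc P (k+1) v y
      = (∏ ℓ ∈ Finset.range k, g (U v y (ℓ+2)) (U v y (ℓ+1))) * g (U v y 1) (U v y 0) := by
        rw [P, Finset.prod_range_succ']
    _ = (∏ ℓ ∈ Finset.range k,
          g (U (y 0) (Fin.tail y) (ℓ+1)) (U (y 0) (Fin.tail y) ℓ)) * g (y 0) v := by
        rw [h0]
        congr 1
        exact Finset.prod_congr rfl fun ℓ _ => by rw [h1 ℓ, h2 ℓ]
    _ = g (y 0) v * P k (y 0) (Fin.tail y) := by rw [mul_comm, P]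

noncomputable def mu1 : Measure ℝ := volume.restrict (Set.Ioo 0 1)

instance : SigmaFinite mu1 := by unfold mu1; infer_instance

lemma mu1_univ : mu1 Set.univ = 1 := by
  rw [mu1, Measure.restrict_apply_univ, Real.volume_Ioo]
  norm_num

lemma restrict_pi (n : ℕ) :
    (volume : Measure (Fin n → ℝ)).restrict (Set.pi Set.univ fun _ => Ioo (0:ℝ) 1)
      = Measure.pi (fun _ : Fin n => mu1) := by
  refine (Measure.pi_eq (μ := fun _ : Fin n => mu1) fun t ht => ?_).symm
  rw [Measure.restrict_apply (MeasurableSet.univ_pi ht), volume_pi,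
    ← Set.pi_inter_distrib, Measure.pi_pi]
  exact Finset.prod_congr rfl fun i _ =>
    (Measure.restrict_apply (ht i)).symm

lemma peel (n : ℕ) (f : (Fin (n+1) → ℝ) → ℝ≥0∞) (hf : Measurable f) :
    ∫⁻ y, f y ∂(Measure.pi fun _ : Fin (n+1) => mu1)
      = ∫⁻ x, ∫⁻ z, f (Fin.cons x z) ∂(Measure.pi fun _ : Fin n => mu1) ∂mu1 := by
  have hm : Measurable fun p : ℝ × (Fin n → ℝ) =>
      f ((MeasurableEquiv.piFinSuccAbove (fun _ : Fin (n+1) => ℝ) 0).symm p) :=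
    hf.comp (MeasurableEquiv.piFinSuccAbove (fun _ : Fin (n+1) => ℝ) 0).symm.measurable
  have hmp := MeasurePreserving.symm
    (MeasurableEquiv.piFinSuccAbove (fun _ : Fin (n+1) => ℝ) 0)
    (measurePreserving_piFinSuccAbove (fun _ : Fin (n+1) => mu1) 0)
  calc ∫⁻ y, f y ∂(Measure.pi fun _ : Fin (n+1) => mu1)
      = ∫⁻ p, f ((MeasurableEquiv.piFinSuccAbove (fun _ : Fin (n+1) => ℝ) 0).symm p)
          ∂(mu1.prod (Measure.pi fun _ : Fin n => mu1)) := (hmp.lintegral_comp hf).symm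
    _ = ∫⁻ x, ∫⁻ z,
          f ((MeasurableEquiv.piFinSuccAbove (fun _ : Fin (n+1) => ℝ) 0).symm (x, z))
          ∂(Measure.pi fun _ : Fin n => mu1) ∂mu1 :=
        lintegral_prod _ hm.aemeasurable
    _ = ∫⁻ x, ∫⁻ z, f (Fin.cons x z) ∂(Measure.pi fun _ : Fin n => mu1) ∂mu1 := by
        refine lintegral_congr fun x => lintegral_congr fun z => ?_
        congr 1
        simp [MeasurableEquiv.piFinSuccAbove_symm_apply, Fin.insertNth_zero', Fin.consEquiv]

lemma chain_le : ∀ k n, k ≤ n → ∀ v ∈ Ioo (0:ℝ) 1,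
    (∫⁻ y, P k v y ∂(Measure.pi fun _ : Fin n => mu1)) ≤ Phi k v := by
  intro k
  induction k with
  | zero =>
    intro n _ v _
    have : ∀ y : Fin n → ℝ, P 0 v y = 1 := fun y => by simp [P]
    simp only [this]
    rw [lintegral_one, Measure.pi_univ]
    simp [mu1_univ, Phi]
  | succ k ih =>
    intro n hkn v hv
    obtain ⟨n', rfl⟩ : ∃ n', n = n'+1 := ⟨n-1, by omega⟩
    rw [peel n' _ (measurable_P (k+1) v (n'+1))]
    have step1 : ∀ (x : ℝ) (z : Fin n' → ℝ), P (k+1) v (Fin.cons x z) = g x v * P k x z := by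
      intro x z
      rw [P_succ]
      simp [Fin.cons_zero, Fin.tail_cons]
    calc ∫⁻ x, ∫⁻ z, P (k+1) v (Fin.cons x z) ∂(Measure.pi fun _ : Fin n' => mu1) ∂mu1
        = ∫⁻ x, g x v * ∫⁻ z, P k x z ∂(Measure.pi fun _ : Fin n' => mu1) ∂mu1 := by
          refine lintegral_congr fun x => ?_
          simp_rw [step1]
          exact lintegral_const_mul' _ _ ENNReal.ofReal_ne_top
      _ ≤ ∫⁻ x, Phi k x * g x v ∂mu1 := by
          refine lintegral_mono_ae ?_
          rw [mu1]
          filter_upwards [ae_restrict_mem measurableSet_Ioo] with x hx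
          rw [mul_comm (Phi k x)]
          exact mul_le_mul' le_rfl (ih n' (by omega) x hx)
      _ = Phi (k+1) v := by rw [Phi, mu1]

end PhiAux
/-- `φ_k(v) ≤ 32^k e / √v` on `(0,1)` for `k ≥ 1`, and consequently
`∫_{(0,1)^{m+1}} ∏_{ℓ=1}^{m-1} 1/√(u_{ℓ+1}(u_{ℓ+1}+u_ℓ)) du ≤ 2e · 32^{m-1}` for `m ≥ 1`. -/
theorem phiRec_bound_and_integral :
    (∀ k : ℕ, 1 ≤ k → ∀ v ∈ Set.Ioo (0:ℝ) 1,
      phiRec k v ≤ 32 ^ k * Real.exp 1 / Real.sqrt v) ∧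
    ∀ m : ℕ, 1 ≤ m →
      (∫ u in (Set.univ : Set (Fin (m + 1))).pi (fun _ => Set.Ioo (0:ℝ) 1),
          ∏ ℓ ∈ Finset.range (m - 1),
            (1 / Real.sqrt
              ((if h : ℓ + 1 < m + 1 then u ⟨ℓ + 1, h⟩ else 0) *
                ((if h : ℓ + 1 < m + 1 then u ⟨ℓ + 1, h⟩ else 0)
                  + (if h : ℓ < m + 1 then u ⟨ℓ, h⟩ else 0)))))
        ≤ 2 * Real.exp 1 * 32 ^ (m - 1) := by
  have he : (2.7182818283:ℝ) ≤ Real.exp 1 := le_of_lt Real.exp_one_gt_d9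
  constructor
  · -- Part 1
    intro k hk v hv
    have hv0 := hv.1
    have hv1 := hv.2
    have h1 : phiRec k v ≤ 4 * 8 ^ k * v ^ (-(1/4):ℝ) := by
      have h := (PhiAux.ofReal_phiRec_le k v).trans (PhiAux.Phi_le k v hv)
      rwa [ENNReal.ofReal_le_ofReal_iff (by positivity)] at h
    have hexp : v ^ (-(1/4):ℝ) ≤ v ^ (-(1/2):ℝ) :=
      Real.rpow_le_rpow_of_exponent_ge hv0 hv1.le (by norm_num)
    have hc : (4:ℝ) * 8 ^ k ≤ 32 ^ k * Real.exp 1 := by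
      have h4 : (4:ℝ) ≤ 4 ^ k := by
        calc (4:ℝ) = 4 ^ 1 := by norm_num
          _ ≤ 4 ^ k := pow_le_pow_right₀ (by norm_num) hk
      have h32 : (32:ℝ) ^ k = 4 ^ k * 8 ^ k := by rw [← mul_pow]; norm_num
      have he1 : (1:ℝ) ≤ Real.exp 1 := by linarith
      have h8 : (0:ℝ) < 8 ^ k := pow_pos (by norm_num) k
      have h32p : (0:ℝ) ≤ (32:ℝ) ^ k := by positivity
      calc (4:ℝ) * 8 ^ k ≤ 4 ^ k * 8 ^ k := by nlinarith
        _ = 32 ^ k := h32.symm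
        _ = 32 ^ k * 1 := (mul_one _).symm
        _ ≤ 32 ^ k * Real.exp 1 := by nlinarith
    have hfin : 32 ^ k * Real.exp 1 / Real.sqrt v
        = 32 ^ k * Real.exp 1 * v ^ (-(1/2):ℝ) := by
      rw [Real.sqrt_eq_rpow, div_eq_mul_inv, ← Real.rpow_neg hv0.le]
    calc phiRec k v ≤ 4 * 8 ^ k * v ^ (-(1/4):ℝ) := h1
      _ ≤ (32 ^ k * Real.exp 1) * v ^ (-(1/2):ℝ) :=
          mul_le_mul hc hexp (Real.rpow_nonneg hv0.le _) (by positivity)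
      _ = 32 ^ k * Real.exp 1 / Real.sqrt v := hfin.symm
  · -- Part 2
    intro m hm
    set F : (Fin (m + 1) → ℝ) → ℝ := fun u =>
      ∏ ℓ ∈ Finset.range (m - 1),
        (1 / Real.sqrt
          ((if h : ℓ + 1 < m + 1 then u ⟨ℓ + 1, h⟩ else 0) *
            ((if h : ℓ + 1 < m + 1 then u ⟨ℓ + 1, h⟩ else 0)
              + (if h : ℓ < m + 1 then u ⟨ℓ, h⟩ else 0)))) with hF
    have hFnn : ∀ u, 0 ≤ F u := fun u =>
      Finset.prod_nonneg fun ℓ _ => by positivity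
    have key : ∀ u : Fin (m+1) → ℝ,
        ENNReal.ofReal (F u) = PhiAux.P (m-1) (u 0) (Fin.tail u) := by
      intro u
      rw [hF]
      rw [ENNReal.ofReal_prod_of_nonneg (fun ℓ _ => by positivity)]
      refine Finset.prod_congr rfl fun ℓ hℓ => ?_
      have hℓm : ℓ < m - 1 := Finset.mem_range.1 hℓ
      have hℓm' : ℓ < m := by omega
      have h1 : ℓ + 1 < m + 1 := by omega
      have h2 : ℓ < m + 1 := by omega
      have hU1 : PhiAux.U (u 0) (Fin.tail u) (ℓ+1) = u ⟨ℓ+1, h1⟩ := by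
        simp only [PhiAux.U, dif_pos hℓm']
        rfl
      have hU0 : PhiAux.U (u 0) (Fin.tail u) ℓ = u ⟨ℓ, h2⟩ := by
        cases ℓ with
        | zero => rfl
        | succ j =>
          have hj : j < m := by omega
          simp only [PhiAux.U, dif_pos hj]
          rfl
      rw [dif_pos h1, dif_pos h2, PhiAux.g, hU1, hU0]
    have measurable_tail : Measurable fun u : Fin (m+1) → ℝ => Fin.tail u :=
      measurable_pi_iff.2 fun j => measurable_pi_apply _
    have hmeasf : Measurable fun u : Fin (m+1) → ℝ =>
        PhiAux.P (m-1) (u 0) (Fin.tail u) := by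
      have h : Measurable ((fun p : ℝ × (Fin m → ℝ) => PhiAux.P (m-1) p.1 p.2) ∘
          fun u : Fin (m+1) → ℝ => (u 0, Fin.tail u)) :=
        (PhiAux.measurable_P2 (m-1) m).comp
          ((measurable_pi_apply 0).prodMk measurable_tail)
      exact h
    have hbound : (∫⁻ x, ∫⁻ z, PhiAux.P (m-1) x z
          ∂(Measure.pi fun _ : Fin m => PhiAux.mu1) ∂PhiAux.mu1)
        ≤ ENNReal.ofReal (4 * 8 ^ (m-1) * (4/3)) := by
      calc (∫⁻ x, ∫⁻ z, PhiAux.P (m-1) x z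
            ∂(Measure.pi fun _ : Fin m => PhiAux.mu1) ∂PhiAux.mu1)
          ≤ ∫⁻ x, ENNReal.ofReal (4 * 8 ^ (m-1) * x ^ (-(1/4):ℝ)) ∂PhiAux.mu1 := by
            refine lintegral_mono_ae ?_
            rw [PhiAux.mu1]
            filter_upwards [ae_restrict_mem measurableSet_Ioo] with x hx
            exact (PhiAux.chain_le (m-1) m (by omega) x hx).trans
              (PhiAux.Phi_le (m-1) x hx)
        _ = ENNReal.ofReal (∫ x in Set.Ioo (0:ℝ) 1, 4 * 8 ^ (m-1) * x ^ (-(1/4):ℝ)) := by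
            rw [PhiAux.mu1]
            rw [ofReal_integral_eq_lintegral_ofReal
              (PhiAux.intOn3.const_mul _)
              (by filter_upwards [ae_restrict_mem measurableSet_Ioo] with x hx
                  have : (0:ℝ) ≤ x ^ (-(1/4):ℝ) := Real.rpow_nonneg hx.1.le _
                  positivity)]
        _ = ENNReal.ofReal (4 * 8 ^ (m-1) * (4/3)) := by
            rw [MeasureTheory.integral_const_mul, PhiAux.int3]
    calc (∫ u in (Set.univ : Set (Fin (m + 1))).pi (fun _ => Set.Ioo (0:ℝ) 1), F u)
        ≤ ‖∫ u in (Set.univ : Set (Fin (m + 1))).pi (fun _ => Set.Ioo (0:ℝ) 1), F u‖ :=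
          le_abs_self _
      _ ≤ (∫⁻ u in (Set.univ : Set (Fin (m + 1))).pi (fun _ => Set.Ioo (0:ℝ) 1),
            ENNReal.ofReal ‖F u‖).toReal := norm_integral_le_lintegral_norm _
      _ = (∫⁻ u, PhiAux.P (m-1) (u 0) (Fin.tail u)
            ∂(Measure.pi fun _ : Fin (m+1) => PhiAux.mu1)).toReal := by
          rw [← PhiAux.restrict_pi (m+1)]
          congr 1
          refine lintegral_congr fun u => ?_
          rw [Real.norm_of_nonneg (hFnn u), key u]
      _ = (∫⁻ x, ∫⁻ z, PhiAux.P (m-1) x z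
            ∂(Measure.pi fun _ : Fin m => PhiAux.mu1) ∂PhiAux.mu1).toReal := by
          rw [PhiAux.peel m _ hmeasf]
          simp only [Fin.cons_zero, Fin.tail_cons]
      _ ≤ (ENNReal.ofReal (4 * 8 ^ (m-1) * (4/3))).toReal :=
          ENNReal.toReal_mono ENNReal.ofReal_ne_top hbound
      _ = 4 * 8 ^ (m-1) * (4/3) := ENNReal.toReal_ofReal (by positivity)
      _ ≤ 2 * Real.exp 1 * 32 ^ (m - 1) := by
          have h8 : (8:ℝ) ^ (m-1) ≤ 32 ^ (m-1) :=
            pow_le_pow_left₀ (by norm_num) (by norm_num) _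
          nlinarith [pow_pos (show (0:ℝ) < 8 by norm_num) (m-1),
            pow_pos (show (0:ℝ) < 32 by norm_num) (m-1)]
end
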